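/- Let H be a connected k-uniform hypergraph with at least one edge, minimum degree δ, and signless Laplacian eigenpair (ρ, x). Then k·x_min ≤ x(min) ≤ (ρ/δ)·x_min. Moreover, if H is regular then both inequalities are equalities. -/

import Mathlib

open Finset Matrix

variable {V : Type*} [Fintype V] [DecidableEq V]

/-- The incidence matrix of a hypergraph with vertex type `V` and edge set `E`:
`B(v,e) = 1` if `v ∈ e` and `0` otherwise. -/
def inc (E : Finset (Finset V)) : Matrix V ↥E ℝ :=
  fun v e => if v ∈ (e : Finset V) then 1 else 0

/-- The signless Laplacian matrix `Q = B * Bᵀ`. -/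
def signlessLap (E : Finset (Finset V)) : Matrix V V ℝ :=
  inc E * (inc E)ᵀ

/-- The degree of a vertex: the number of edges containing it. -/
def deg (E : Finset (Finset V)) (v : V) : ℕ :=
  (E.filter fun e => v ∈ e).card

/-- A hypergraph is connected if the reflexive-transitive closure of the relation
"`u ≠ v` and some edge contains both `u` and `v`" relates every pair of vertices. -/
def HConnected (E : Finset (Finset V)) : Prop :=
  ∀ u v : V, Relation.ReflTransGen (fun a b => a ≠ b ∧ ∃ e ∈ E, a ∈ e ∧ b ∈ e) u v

/-- A hypergraph is regular if all vertices have the same degree. -/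
def HRegular (E : Finset (Finset V)) : Prop :=
  ∃ r, ∀ v : V, deg E v = r

/-- A signless Laplacian eigenpair `(ρ, x)`: `x` is entrywise positive,
normalized by `∑ v, x v ^ 2 = 1`, and `Q x = ρ x`. -/
def Eigenpair (E : Finset (Finset V)) (ρ : ℝ) (x : V → ℝ) : Prop :=
  (∀ v, 0 < x v) ∧ (∑ v, x v ^ 2 = 1) ∧ (signlessLap E).mulVec x = ρ • x

/-! Evaluating `Q x = ρ x` at a vertex `w` gives `ρ x_w = ∑_{e ∋ w} x(e)`. Every edge sum is
at least `k x_min`, which is the lower bound. At a vertex where `x` is minimal the right-hand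
side is at least `δ · x(min)`, which is the upper bound. For an `r`-regular hypergraph,
comparing the identity at a minimal and at a maximal vertex forces `ρ = r k`, so `ρ / δ = k`
and the two bounds meet. -/

lemma signlessLap_mulVec_apply {V : Type*} [Fintype V] [DecidableEq V] (E : Finset (Finset V))
    (x : V → ℝ) (w : V) :
    (signlessLap E).mulVec x w = ∑ e ∈ E with w ∈ e, ∑ v ∈ e, x v := by
  have hinc : ∀ e : ↥E, ((inc E)ᵀ *ᵥ x) e = ∑ v ∈ (e : Finset V), x v := fun e => by
    simp [mulVec, dotProduct, inc, sum_ite_mem]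
  rw [signlessLap, ← mulVec_mulVec, mulVec, dotProduct]
  simp only [hinc, inc, ite_mul, one_mul, zero_mul]
  rw [sum_coe_sort E (fun e => if w ∈ e then ∑ v ∈ e, x v else 0), sum_filter]

lemma mul_apply_eq_sum_of_signlessLap_mulVec_eq {V : Type*} [Fintype V] [DecidableEq V]
    {E : Finset (Finset V)} {ρ : ℝ} {x : V → ℝ}
    (h : (signlessLap E).mulVec x = ρ • x) (w : V) :
    ρ * x w = ∑ e ∈ E with w ∈ e, ∑ v ∈ e, x v := by
  rw [← signlessLap_mulVec_apply, h, Pi.smul_apply, smul_eq_mul]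

lemma deg_pos_of_hconnected {V : Type*} [DecidableEq V] {E : Finset (Finset V)}
    (hconn : HConnected E) (hE : ∃ e ∈ E, e.Nonempty) (u : V) : 0 < deg E u := by
  obtain ⟨e, he, w, hw⟩ := hE
  rcases (hconn u w).cases_head with rfl | ⟨_, ⟨-, e', he', hue', -⟩, -⟩
  · exact card_pos.mpr ⟨e, mem_filter.mpr ⟨he, hw⟩⟩
  · exact card_pos.mpr ⟨e', mem_filter.mpr ⟨he', hue'⟩⟩

lemma deg_mul_le_sum_of_le {V : Type*} [DecidableEq V] {E : Finset (Finset V)}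
    {f : Finset V → ℝ} {a : ℝ} (h : ∀ e ∈ E, a ≤ f e) (w : V) :
    deg E w * a ≤ ∑ e ∈ E with w ∈ e, f e := by
  rw [deg, ← nsmul_eq_mul]
  exact card_nsmul_le_sum _ _ _ fun e he => h e (mem_filter.mp he).1

lemma sum_le_deg_mul_of_le {V : Type*} [DecidableEq V] {E : Finset (Finset V)}
    {f : Finset V → ℝ} {a : ℝ} (h : ∀ e ∈ E, f e ≤ a) (w : V) :
    ∑ e ∈ E with w ∈ e, f e ≤ deg E w * a := by
  rw [deg, ← nsmul_eq_mul]
  exact sum_le_card_nsmul _ _ _ fun e he => h e (mem_filter.mp he).1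

lemma eigenvalue_eq_of_regular_of_uniform {V : Type*} [Fintype V] [DecidableEq V] [Nonempty V]
    {E : Finset (Finset V)} {k r : ℕ}
    (hunif : ∀ e ∈ E, #e = k) (hreg : ∀ v, deg E v = r) {ρ : ℝ} {x : V → ℝ}
    (hpos : ∀ v, 0 < x v) (heig : (signlessLap E).mulVec x = ρ • x) : ρ = r * k := by
  obtain ⟨u, hu⟩ := Finite.exists_min x
  obtain ⟨z, hz⟩ := Finite.exists_max x
  have hedge_ge : ∀ e ∈ E, k * x u ≤ ∑ v ∈ e, x v := fun e he => by
    simpa [hunif e he] using card_nsmul_le_sum e x _ fun v _ => hu v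
  have hedge_le : ∀ e ∈ E, ∑ v ∈ e, x v ≤ k * x z := fun e he => by
    simpa [hunif e he] using sum_le_card_nsmul e x _ fun v _ => hz v
  have hge : r * k * x u ≤ ρ * x u := by
    rw [mul_apply_eq_sum_of_signlessLap_mulVec_eq heig, ← hreg u, mul_assoc]
    exact deg_mul_le_sum_of_le hedge_ge u
  have hle : ρ * x z ≤ r * k * x z := by
    rw [mul_apply_eq_sum_of_signlessLap_mulVec_eq heig, ← hreg z, mul_assoc]
    exact sum_le_deg_mul_of_le hedge_le z
  exact le_antisymm (le_of_mul_le_mul_right hle (hpos z)) (le_of_mul_le_mul_right hge (hpos u))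

theorem edge_min_bounds_general {V : Type*} [Fintype V] [DecidableEq V] (k : ℕ)
    (hk : 2 ≤ k) (E : Finset (Finset V)) (hunif : ∀ e ∈ E, e.card = k)
    (hconn : HConnected E)
    (ρ : ℝ) (x : V → ℝ) (hx : Eigenpair E ρ x)
    (δ : ℕ) (hδ : IsLeast (Set.range (deg E)) δ)
    (xmin : ℝ) (hmin : IsLeast (Set.range x) xmin)
    (xemin : ℝ) (hemin : IsLeast ((fun e : Finset V => ∑ v ∈ e, x v) '' ↑E) xemin) :
    ((k : ℝ) * xmin ≤ xemin ∧ xemin ≤ ρ / (δ : ℝ) * xmin) ∧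
      (HRegular E → (k : ℝ) * xmin = xemin ∧ xemin = ρ / (δ : ℝ) * xmin) := by
  obtain ⟨hpos, -, heig⟩ := hx
  obtain ⟨u, rfl⟩ := hmin.1
  obtain ⟨e₀, he₀, rfl⟩ := hemin.1
  have hxmin : ∀ v, x u ≤ x v := fun v => hmin.2 ⟨v, rfl⟩
  have hlower : (k : ℝ) * x u ≤ ∑ v ∈ e₀, x v := by
    simpa [hunif e₀ he₀] using card_nsmul_le_sum e₀ x _ fun v _ => hxmin v
  obtain ⟨v₀, rfl⟩ := hδ.1
  have hδpos : (0 : ℝ) < deg E v₀ := by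
    have hne : 0 < #e₀ := hunif e₀ he₀ ▸ by omega
    exact_mod_cast deg_pos_of_hconnected hconn ⟨e₀, he₀, card_pos.mp hne⟩ v₀
  have hdeg_mul : (deg E v₀ : ℝ) * ∑ v ∈ e₀, x v ≤ ρ * x u := calc
    _ ≤ deg E u * ∑ v ∈ e₀, x v := by
      have hδu : deg E v₀ ≤ deg E u := hδ.2 ⟨u, rfl⟩
      gcongr
      exact sum_nonneg fun v _ => (hpos v).le
    _ ≤ ρ * x u := by
      rw [mul_apply_eq_sum_of_signlessLap_mulVec_eq heig]
      exact deg_mul_le_sum_of_le (fun e he => hemin.2 ⟨e, he, rfl⟩) u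
  have hupper : ∑ v ∈ e₀, x v ≤ ρ / deg E v₀ * x u := by
    rw [div_mul_eq_mul_div, le_div_iff₀ hδpos]
    linarith
  refine ⟨⟨hlower, hupper⟩, fun ⟨r, hr⟩ => ?_⟩
  have : Nonempty V := ⟨u⟩
  have hρ : ρ / deg E v₀ = k := by
    rw [eigenvalue_eq_of_regular_of_uniform hunif hr hpos heig, hr v₀]
    field_simp [hr v₀ ▸ hδpos.ne']
  rw [hρ] at hupper ⊢
  exact ⟨le_antisymm hlower hupper, (le_antisymm hlower hupper).symm⟩

/-- For a connected `k`-graph with at least one edge, minimum degree `δ` and signless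
Laplacian eigenpair `(ρ, x)`: `k x_min ≤ x(min) ≤ (ρ/δ) x_min`; if `H` is regular
both are equalities. -/
theorem edge_min_bounds {V : Type*} [Fintype V] [DecidableEq V] (k : ℕ)
    (hk : 2 ≤ k) (E : Finset (Finset V)) (hunif : ∀ e ∈ E, e.card = k)
    (hconn : HConnected E) (hE : E.Nonempty)
    (ρ : ℝ) (x : V → ℝ) (hx : Eigenpair E ρ x)
    (δ : ℕ) (hδ : IsLeast (Set.range (deg E)) δ)
    (xmin : ℝ) (hmin : IsLeast (Set.range x) xmin)
    (xemin : ℝ) (hemin : IsLeast ((fun e : Finset V => ∑ v ∈ e, x v) '' ↑E) xemin) :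
    ((k : ℝ) * xmin ≤ xemin ∧ xemin ≤ ρ / (δ : ℝ) * xmin) ∧
      (HRegular E → (k : ℝ) * xmin = xemin ∧ xemin = ρ / (δ : ℝ) * xmin) :=
  edge_min_bounds_general k hk E hunif hconn ρ x hx δ hδ xmin hmin xemin hemin
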